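/- arXiv:2206.13093 — 5 statements merged into one kernel-verified Lean document; each statement's English description precedes it below -/
import Mathlib

section
/- Let A be symmetric positive definite, b ∈ ℝⁿ with b ≠ 0, and set c̃ = c/(bᵀA⁻¹b) with 0 < c̃ ≤ 1. Then x* = (1 − √(1 − c̃))·A⁻¹b minimizes xᵀAx subject to the equality constraint xᵀAx − 2bᵀx + c = 0. -/
open Matrix

/-- With c̃ = c/(bᵀA⁻¹b) ∈ (0,1], x* = (1 − √(1 − c̃))·A⁻¹b minimizes
xᵀAx subject to xᵀAx − 2bᵀx + c = 0. -/
theorem stmt2 {n : ℕ} (A : Matrix (Fin n) (Fin n) ℝ) (hA : A.PosDef)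
    (b : Fin n → ℝ) (hb : b ≠ 0) (c : ℝ) (hc : 0 < c)
    (ct : ℝ) (hct : ct = c / (b ⬝ᵥ A⁻¹ *ᵥ b)) (hct0 : 0 < ct) (hct1 : ct ≤ 1) :
    let xs : Fin n → ℝ := (1 - Real.sqrt (1 - ct)) • (A⁻¹ *ᵥ b)
    xs ⬝ᵥ A *ᵥ xs - 2 * (b ⬝ᵥ xs) + c = 0 ∧
    ∀ x : Fin n → ℝ, x ⬝ᵥ A *ᵥ x - 2 * (b ⬝ᵥ x) + c = 0 →
      xs ⬝ᵥ A *ᵥ xs ≤ x ⬝ᵥ A *ᵥ x := by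
  intro xs
  have hT : Aᵀ = A := by simpa using hA.isHermitian.eq
  have hsym : ∀ x y : Fin n → ℝ, x ⬝ᵥ A *ᵥ y = y ⬝ᵥ A *ᵥ x := by
    intro x y
    rw [Matrix.dotProduct_mulVec, ← Matrix.mulVec_transpose, hT, dotProduct_comm]
  set v : Fin n → ℝ := A⁻¹ *ᵥ b with hv
  have hAv : A *ᵥ v = b := by
    rw [hv, Matrix.mulVec_mulVec, Matrix.mul_nonsing_inv _ (isUnit_iff_ne_zero.mpr hA.det_pos.ne'),
      Matrix.one_mulVec]
  have hvne : v ≠ 0 := by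
    intro h
    apply hb
    rw [← hAv, h, Matrix.mulVec_zero]
  set β : ℝ := b ⬝ᵥ v with hβdef
  have hβ : 0 < β := by
    have := hA.re_dotProduct_pos hvne
    simp only [RCLike.star_def, star_trivial] at this
    calc (0:ℝ) < v ⬝ᵥ A *ᵥ v := this
    _ = β := by rw [hβdef, ← hAv, dotProduct_comm]
  have hc' : c = ct * β := by
    rw [hct]
    field_simp
  set r : ℝ := Real.sqrt (1 - ct) with hr
  have hr0 : 0 ≤ r := Real.sqrt_nonneg _
  have hsq : r ^ 2 = 1 - ct := Real.sq_sqrt (by linarith)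
  set t : ℝ := 1 - r with htdef
  have ht : t ^ 2 - 2 * t + ct = 0 := by
    rw [htdef]; linear_combination hsq
  have ht1 : t ≤ 1 := by rw [htdef]; linarith
  -- values at xs
  have h1 : xs ⬝ᵥ A *ᵥ xs = t ^ 2 * β := by
    show (t • v) ⬝ᵥ A *ᵥ (t • v) = t ^ 2 * β
    rw [Matrix.mulVec_smul, hAv, smul_dotProduct, dotProduct_smul,
      dotProduct_comm, ← hβdef, smul_eq_mul, smul_eq_mul]
    ring
  have h2 : b ⬝ᵥ xs = t * β := by
    show b ⬝ᵥ (t • v) = t * β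
    rw [dotProduct_smul, ← hβdef, smul_eq_mul]
  constructor
  · rw [h1, h2]
    linear_combination β * ht + hc'
  · intro x hx
    rw [h1]
    set s : ℝ := x ⬝ᵥ A *ᵥ x with hsdef
    set d : ℝ := b ⬝ᵥ x with hddef
    -- Cauchy–Schwarz: d^2 ≤ β * s
    have hd2 : d ^ 2 ≤ β * s := by
      set u : Fin n → ℝ := x - (d / β) • v with hu
      have h0 : (0:ℝ) ≤ u ⬝ᵥ A *ᵥ u := by
        have := hA.posSemidef.re_dotProduct_nonneg u
        simpa using this
      have e1 : x ⬝ᵥ A *ᵥ v = d := by rw [hAv, dotProduct_comm, ← hddef]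
      have e2 : v ⬝ᵥ A *ᵥ x = d := by rw [hsym, e1]
      have e3 : v ⬝ᵥ A *ᵥ v = β := by rw [hAv, dotProduct_comm, ← hβdef]
      have hexp : u ⬝ᵥ A *ᵥ u = s - d ^ 2 / β := by
        simp only [hu, sub_dotProduct, dotProduct_sub, Matrix.mulVec_sub,
          Matrix.mulVec_smul, smul_dotProduct, dotProduct_smul,
          smul_eq_mul, e1, e2, e3, ← hsdef]
        field_simp
        ring
      rw [hexp] at h0
      have := (div_le_iff₀ hβ).mp (by linarith : d ^ 2 / β ≤ s)
      linarith [this]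
    have hds : d = (s + c) / 2 := by linarith
    have hd2' : (s + c) ^ 2 ≤ 4 * (β * s) := by rw [hds] at hd2; nlinarith [hd2]
    have kq : s ^ 2 - (4 * β - 2 * c) * s + c ^ 2 ≤ 0 := by nlinarith [hd2']
    have ha : t ^ 2 * β = 2 * β * t - c := by linear_combination β * ht + hc'
    have haB : (2 * β * t - c) * (4 * β - 2 * β * t - c) = c ^ 2 := by
      linear_combination (-4 * β ^ 2) * ht + (-4 * β) * hc'
    have hBa : 2 * β * t - c ≤ 4 * β - 2 * β * t - c := by nlinarith [hβ, ht1]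
    rw [ha]
    nlinarith [kq, haB, hBa]
end

section
/- Define the ramp function R(x) = max(x, 0) and the clamp function C(x; a, b) = min(max(x, a), b) for a ≤ b. Let A be symmetric positive definite, b ∈ ℝⁿ nonzero, c ∈ ℝ, kₓ, k_y > 0, c̃ = c/(bᵀA⁻¹b), k̃ₓ = kₓ/(kₓ+k_y). Then the unique minimizer of kₓ·xᵀAx + k_y·|y| subject to y ≥ xᵀAx − 2bᵀx + c is x* = (1 − √(C(1 − c̃; k̃ₓ², 1)))·A⁻¹b and y* = R(c − (1 − k̃ₓ²)·bᵀA⁻¹b). -/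
open Matrix

/-!
Write `g x = xᵀAx − 2bᵀx + c`. For a multiplier `ν ∈ [0, k_y]`, every feasible `(x, y)` has
`k_y |y| ≥ ν y ≥ ν g x`, so the objective dominates the Lagrangian `kₓ xᵀAx + ν g x`, a strictly
convex quadratic whose unique minimiser is `ν / (kₓ + ν) • A⁻¹b`. With `r = √C(1 − c̃; k̃ₓ², 1)`
and `ν = kₓ (1 − r) / r` this minimiser is `x*`, and complementary slackness
`k_y R(g x*) = ν g x*` holds in each clamp regime (`ν = k_y`, `g x* = 0`, `ν = 0` respectively).
Hence the bound is attained exactly at `(x*, R(g x*))`, and `R(g x*) = y*`.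
-/

/-- Ramp function R(x) = max(x,0). -/
noncomputable def ramp (x : ℝ) : ℝ := max x 0

/-- Clamp function C(x;a,b) = min(max(x,a),b). -/
noncomputable def clamp (x a b : ℝ) : ℝ := min (max x a) b

lemma clamp_cases {x a b : ℝ} (hab : a ≤ b) :
    (x ≤ a ∧ clamp x a b = a) ∨ (a ≤ x ∧ x ≤ b ∧ clamp x a b = x) ∨
      (b ≤ x ∧ clamp x a b = b) := by
  unfold clamp
  rcases le_total x a with hxa | hax
  · exact Or.inl ⟨hxa, by rw [max_eq_right hxa, min_eq_left hab]⟩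
  rcases le_total x b with hxb | hbx
  · exact Or.inr (Or.inl ⟨hax, hxb, by rw [max_eq_left hax, min_eq_left hxb]⟩)
  · exact Or.inr (Or.inr ⟨hbx, by rw [max_eq_left hax, min_eq_right hbx]⟩)

lemma ramp_nonneg (x : ℝ) : 0 ≤ ramp x := le_max_right x 0

lemma le_ramp (x : ℝ) : x ≤ ramp x := le_max_left x 0

lemma ramp_of_nonpos {x : ℝ} (h : x ≤ 0) : ramp x = 0 := max_eq_right h

lemma ramp_of_nonneg {x : ℝ} (h : 0 ≤ x) : ramp x = x := max_eq_left h

lemma ramp_mul {β x : ℝ} (hβ : 0 ≤ β) : ramp (β * x) = β * ramp x := by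
  rw [ramp, ramp, mul_max_of_nonneg _ _ hβ, mul_zero]

lemma ramp_lt_abs {u y : ℝ} (hy : u ≤ y) (hne : y ≠ ramp u) : ramp u < |y| := by
  rcases le_total u 0 with hu | hu
  · rw [ramp_of_nonpos hu] at hne ⊢
    exact abs_pos.2 hne
  · rw [ramp_of_nonneg hu] at hne ⊢
    exact (lt_of_le_of_ne hy hne.symm).trans_le (le_abs_self y)

lemma ramp_clamp_sub {x a b : ℝ} (hab : a ≤ b) : ramp (clamp x a b - x) = ramp (a - x) := by
  rcases clamp_cases (x := x) hab with ⟨hxa, h⟩ | ⟨hax, hxb, h⟩ | ⟨hbx, h⟩ <;> rw [h]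
  · rw [sub_self, ramp_of_nonpos le_rfl, ramp_of_nonpos (by linarith)]
  · rw [ramp_of_nonpos (by linarith), ramp_of_nonpos (by linarith)]

lemma ramp_sq_sqrt_clamp_sub {s a : ℝ} (ha0 : 0 ≤ a) (ha1 : a ≤ 1) :
    ramp (√(clamp s a 1) ^ 2 - s) = ramp (a - s) := by
  have h : 0 ≤ clamp s a 1 := ha0.trans (le_min (le_max_right _ _) ha1)
  rw [Real.sq_sqrt h, ramp_clamp_sub ha1]

lemma exists_kkt_multiplier {K L s r : ℝ} (hK : 0 < K) (hL : 0 < L)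
    (hr : r = √(clamp s ((K / (K + L)) ^ 2) 1)) :
    ∃ ν, 0 ≤ ν ∧ ν ≤ L ∧ (K + ν) * (1 - r) = ν ∧ L * ramp (r ^ 2 - s) = ν * (r ^ 2 - s) := by
  set k := K / (K + L)
  have hKL : 0 < K + L := by linarith
  have hk0 : 0 < k := div_pos hK hKL
  have hk1 : k < 1 := (div_lt_one hKL).2 (by linarith)
  have hkK : k * (K + L) = K := div_mul_cancel₀ K hKL.ne'
  clear_value k
  rcases clamp_cases (x := s) (pow_le_one₀ hk0.le hk1.le) with
    ⟨hsk, h⟩ | ⟨hks, hs1, h⟩ | ⟨hs1, h⟩ <;> rw [h] at hr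
  · rw [Real.sqrt_sq hk0.le] at hr
    subst hr
    refine ⟨L, hL.le, le_rfl, by linear_combination -hkK, ?_⟩
    rw [ramp_of_nonneg (by linarith)]
  · have hr2 : r ^ 2 = s := by rw [hr, Real.sq_sqrt ((sq_nonneg k).trans hks)]
    have hkr : k ≤ r := by rw [hr]; exact Real.le_sqrt_of_sq_le hks
    have hr1 : r ≤ 1 := by rw [hr]; exact Real.sqrt_le_one.mpr hs1
    have hr0 : 0 < r := hk0.trans_le hkr
    refine ⟨K * (1 - r) / r, div_nonneg (mul_nonneg hK.le (sub_nonneg.2 hr1)) hr0.le, ?_,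
      by field_simp; ring, by rw [hr2, sub_self, mul_zero, ramp_of_nonpos le_rfl, mul_zero]⟩
    rw [div_le_iff₀ hr0]
    nlinarith
  · rw [Real.sqrt_one] at hr
    subst hr
    refine ⟨0, le_rfl, hL.le, by ring, ?_⟩
    rw [ramp_of_nonpos (by linarith), mul_zero, zero_mul]

lemma lagrangian_sufficiency {X : Type*} {q g : X → ℝ} {K L ν : ℝ} {x₀ : X} (hL : 0 < L)
    (hν : 0 ≤ ν) (hνL : ν ≤ L) (hmin : ∀ x ≠ x₀, K * q x₀ + ν * g x₀ < K * q x + ν * g x)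
    (hslack : L * ramp (g x₀) = ν * g x₀) {x : X} {y : ℝ} (hy : g x ≤ y)
    (hne : (x, y) ≠ (x₀, ramp (g x₀))) :
    K * q x₀ + L * |ramp (g x₀)| < K * q x + L * |y| := by
  rw [abs_of_nonneg (ramp_nonneg _)]
  by_cases hx : x = x₀
  · subst hx
    have hy' : y ≠ ramp (g x) := fun h => hne (by rw [h])
    have := ramp_lt_abs hy hy'
    gcongr
  · have hdual : ν * g x ≤ L * |y| :=
      calc ν * g x ≤ ν * |y| := mul_le_mul_of_nonneg_left (hy.trans (le_abs_self y)) hν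
        _ ≤ L * |y| := mul_le_mul_of_nonneg_right hνL (abs_nonneg y)
    linarith [hmin x hx]

lemma Matrix.PosDef.quadratic_lt_of_mulVec_eq {ι : Type*} [Fintype ι] {A : Matrix ι ι ℝ}
    (hA : A.PosDef) {w x₀ x : ι → ℝ} (hx₀ : A *ᵥ x₀ = w) (hx : x ≠ x₀) :
    x₀ ⬝ᵥ A *ᵥ x₀ - 2 * (w ⬝ᵥ x₀) < x ⬝ᵥ A *ᵥ x - 2 * (w ⬝ᵥ x) := by
  have hAt : Aᵀ = A := by simpa using hA.isHermitian.eq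
  have hx₀x : x₀ ⬝ᵥ A *ᵥ x = w ⬝ᵥ x := by
    rw [← hAt, dotProduct_transpose_mulVec, hx₀, dotProduct_comm]
  have hsq : (x - x₀) ⬝ᵥ A *ᵥ (x - x₀) =
      (x ⬝ᵥ A *ᵥ x - 2 * (w ⬝ᵥ x)) - (x₀ ⬝ᵥ A *ᵥ x₀ - 2 * (w ⬝ᵥ x₀)) := by
    simp only [mulVec_sub, dotProduct_sub, sub_dotProduct, hx₀x, hx₀, dotProduct_comm x w,
      dotProduct_comm x₀ w]
    ring
  have hpos := hA.dotProduct_mulVec_pos (sub_ne_zero.2 hx)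
  rw [star_trivial, hsq] at hpos
  linarith

/-- The unique minimizer of kx·xᵀAx + ky·|y| subject to
y ≥ xᵀAx − 2bᵀx + c is x* = (1 − √(C(1 − c̃; k̃x², 1)))·A⁻¹b,
y* = R(c − (1 − k̃x²)·bᵀA⁻¹b). -/
theorem stmt6 {n : ℕ} (A : Matrix (Fin n) (Fin n) ℝ) (hA : A.PosDef)
    (b : Fin n → ℝ) (hb : b ≠ 0) (c : ℝ) (kx ky : ℝ) (hkx : 0 < kx) (hky : 0 < ky) :
    let ktx : ℝ := kx / (kx + ky)
    let ct : ℝ := c / (b ⬝ᵥ A⁻¹ *ᵥ b)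
    let xs : Fin n → ℝ := (1 - Real.sqrt (clamp (1 - ct) (ktx ^ 2) 1)) • (A⁻¹ *ᵥ b)
    let ys : ℝ := ramp (c - (1 - ktx ^ 2) * (b ⬝ᵥ A⁻¹ *ᵥ b))
    (ys ≥ xs ⬝ᵥ A *ᵥ xs - 2 * (b ⬝ᵥ xs) + c) ∧
    ∀ (x : Fin n → ℝ) (y : ℝ), y ≥ x ⬝ᵥ A *ᵥ x - 2 * (b ⬝ᵥ x) + c →
      (x, y) ≠ (xs, ys) →
      kx * (xs ⬝ᵥ A *ᵥ xs) + ky * |ys| < kx * (x ⬝ᵥ A *ᵥ x) + ky * |y| := by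
  intro ktx ct xs ys
  set u := A⁻¹ *ᵥ b with hu
  set β := b ⬝ᵥ u
  have hβ : 0 < β := by simpa using hA.inv.dotProduct_mulVec_pos hb
  have hAu : A *ᵥ u = b := by
    rw [hu, mulVec_mulVec, mul_nonsing_inv _ (isUnit_iff_ne_zero.2 hA.det_pos.ne'), one_mulVec]
  set s := 1 - ct
  have hc : c = β * (1 - s) := by
    simp only [s, show ct = c / β from rfl]
    field_simp
    ring
  set r := √(clamp s (ktx ^ 2) 1) with hr
  obtain ⟨ν, hν0, hνL, hstat, hslack⟩ := exists_kkt_multiplier hkx hky hr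
  have hxs : xs = (1 - r) • u := rfl
  have hAxs : A *ᵥ xs = (1 - r) • b := by rw [hxs, mulVec_smul, hAu]
  have hgxs : xs ⬝ᵥ A *ᵥ xs - 2 * (b ⬝ᵥ xs) + c = β * (r ^ 2 - s) := by
    rw [hAxs, hxs]
    simp only [dotProduct_smul, smul_dotProduct, smul_eq_mul, dotProduct_comm u b, hc]
    ring
  have hys : ys = ramp (xs ⬝ᵥ A *ᵥ xs - 2 * (b ⬝ᵥ xs) + c) := by
    have hk : 0 < ktx := div_pos hkx (by linarith)
    have hk1 : ktx ≤ 1 := (div_le_one (by linarith)).2 (by linarith)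
    rw [show ys = ramp (c - (1 - ktx ^ 2) * β) from rfl, hgxs, ramp_mul hβ.le,
      ramp_sq_sqrt_clamp_sub (sq_nonneg _) (pow_le_one₀ hk.le hk1), ← ramp_mul hβ.le, hc]
    ring_nf
  refine ⟨hys ▸ le_ramp _, fun x y hy hne => ?_⟩
  rw [hys] at hne ⊢
  refine lagrangian_sufficiency (q := fun x => x ⬝ᵥ A *ᵥ x)
    (g := fun x => x ⬝ᵥ A *ᵥ x - 2 * (b ⬝ᵥ x) + c) hky hν0 hνL (fun x hx => ?_) ?_ hy hne
  · have h := mul_lt_mul_of_pos_left (hA.quadratic_lt_of_mulVec_eq hAxs hx)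
      (by linarith : 0 < kx + ν)
    simp only [smul_dotProduct, smul_eq_mul] at h
    linear_combination h - 2 * (b ⬝ᵥ x - b ⬝ᵥ xs) * hstat
  · rw [hgxs, ramp_mul hβ.le]
    linear_combination β * hslack
end

section
/- Fix x ∈ ℝⁿ with ∇V(x) ≠ 0 and γ > 0, and define HJ(f,G,h) = ∇Vᵀf + (1/(2γ²))‖Gᵀ∇V‖² + (1/2)‖h‖² (pointwise at x). Given f_n ∈ ℝⁿ, and letting f_m = f_n − (1/‖∇V‖²)·R(HJ(f_n,G,h))·∇V with R the ramp function, then: (i) HJ(f_m, G, h) ≤ 0, and (ii) f_m minimizes ‖f − f_n‖ among all f ∈ ℝⁿ with HJ(f, G, h) ≤ 0. -/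
open Matrix

/-
Subtracting `max (a ⬝ᵥ x + c) 0 / ‖a‖²` times `a` moves `x` along the normal of the half-space
`{y | a ⬝ᵥ y + c ≤ 0}` exactly onto its boundary when `x` violates the constraint, and leaves `x`
alone otherwise; this costs squared distance `max (a ⬝ᵥ x + c) 0 ^ 2 / ‖a‖²`. A feasible `y` must
lower the constraint value by at least `max (a ⬝ᵥ x + c) 0`, i.e. `|a ⬝ᵥ (y - x)| ≥ max (a ⬝ᵥ x + c) 0`,
so Cauchy–Schwarz gives `‖y - x‖² ≥ max (a ⬝ᵥ x + c) 0 ^ 2 / ‖a‖²`.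
-/

section HalfSpace

variable {ι 𝕜 : Type*} [Fintype ι] [Field 𝕜] [LinearOrder 𝕜] [IsStrictOrderedRing 𝕜]

theorem sq_dotProduct_le_dotProduct_self_mul (v w : ι → 𝕜) :
    (v ⬝ᵥ w) ^ 2 ≤ (v ⬝ᵥ v) * (w ⬝ᵥ w) := by
  simpa only [dotProduct, sq] using Finset.sum_mul_sq_le_sq_mul_sq Finset.univ v w

theorem dotProduct_self_pos {v : ι → 𝕜} (hv : v ≠ 0) : 0 < v ⬝ᵥ v :=
  (Fintype.sum_nonneg fun i => mul_self_nonneg (v i)).lt_of_ne'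
    (dotProduct_self_eq_zero.not.mpr hv)

def halfSpaceProj (a : ι → 𝕜) (c : 𝕜) (x : ι → 𝕜) : ι → 𝕜 :=
  x - ((1 / (a ⬝ᵥ a)) * max (a ⬝ᵥ x + c) 0) • a

variable {a : ι → 𝕜} (c : 𝕜) (x : ι → 𝕜)

theorem dotProduct_halfSpaceProj_add (ha : a ≠ 0) :
    a ⬝ᵥ halfSpaceProj a c x + c = min (a ⬝ᵥ x + c) 0 := by
  have hpos := dotProduct_self_pos ha
  rw [halfSpaceProj, dotProduct_sub, dotProduct_smul, smul_eq_mul, one_div_mul_eq_div,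
    div_mul_cancel₀ _ hpos.ne']
  linarith [min_add_max (a ⬝ᵥ x + c) 0]

theorem halfSpaceProj_sub_self_dotProduct (ha : a ≠ 0) :
    (halfSpaceProj a c x - x) ⬝ᵥ (halfSpaceProj a c x - x) =
      max (a ⬝ᵥ x + c) 0 ^ 2 / (a ⬝ᵥ a) := by
  have hpos := dotProduct_self_pos ha
  rw [halfSpaceProj, sub_sub_cancel_left, neg_dotProduct, dotProduct_neg, neg_neg,
    smul_dotProduct, dotProduct_smul, smul_eq_mul, smul_eq_mul]
  field_simp

theorem halfSpaceProj_sub_self_dotProduct_le (ha : a ≠ 0) {y : ι → 𝕜} (hy : a ⬝ᵥ y + c ≤ 0) :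
    (halfSpaceProj a c x - x) ⬝ᵥ (halfSpaceProj a c x - x) ≤ (y - x) ⬝ᵥ (y - x) := by
  have hpos := dotProduct_self_pos ha
  have hdrop : max (a ⬝ᵥ x + c) 0 ≤ |a ⬝ᵥ (y - x)| := by
    rw [dotProduct_sub]
    exact max_le (by linarith [neg_abs_le (a ⬝ᵥ y - a ⬝ᵥ x)]) (abs_nonneg _)
  rw [halfSpaceProj_sub_self_dotProduct c x ha, div_le_iff₀' hpos]
  calc max (a ⬝ᵥ x + c) 0 ^ 2 ≤ (a ⬝ᵥ (y - x)) ^ 2 := by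
        rw [← sq_abs (a ⬝ᵥ (y - x))]
        exact pow_le_pow_left₀ (le_max_right _ _) hdrop 2
    _ ≤ (a ⬝ᵥ a) * ((y - x) ⬝ᵥ (y - x)) := sq_dotProduct_le_dotProduct_self_mul a (y - x)

end HalfSpace

theorem stmt7_general {n m l : ℕ} (β : Fin n → ℝ) (hβ : β ≠ 0)
    (G : Matrix (Fin n) (Fin m) ℝ) (h : Fin l → ℝ) (γ : ℝ)
    (fn : Fin n → ℝ) :
    let HJ : (Fin n → ℝ) → ℝ := fun f =>
      β ⬝ᵥ f + (1 / (2 * γ ^ 2)) * ((Gᵀ *ᵥ β) ⬝ᵥ (Gᵀ *ᵥ β)) + (1 / 2) * (h ⬝ᵥ h)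
    let fm : Fin n → ℝ := fn - ((1 / (β ⬝ᵥ β)) * max (HJ fn) 0) • β
    HJ fm ≤ 0 ∧
    ∀ f : Fin n → ℝ, HJ f ≤ 0 → (fm - fn) ⬝ᵥ (fm - fn) ≤ (f - fn) ⬝ᵥ (f - fn) := by
  intro HJ fm
  set c := (1 / (2 * γ ^ 2)) * ((Gᵀ *ᵥ β) ⬝ᵥ (Gᵀ *ᵥ β)) + (1 / 2) * (h ⬝ᵥ h)
  have hHJ (f : Fin n → ℝ) : HJ f = β ⬝ᵥ f + c := add_assoc _ _ _
  have hfm : fm = halfSpaceProj β c fn := by rw [halfSpaceProj, ← hHJ]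
  simp only [hHJ, hfm]
  exact ⟨(dotProduct_halfSpaceProj_add c fn hβ).trans_le (min_le_right _ _),
    fun f hf => halfSpaceProj_sub_self_dotProduct_le c fn hβ hf⟩

/-- Projection of f_n onto the half-space {f : HJ(f,G,h) ≤ 0}, where
HJ(f,G,h) = ∇Vᵀf + (1/(2γ²))‖Gᵀ∇V‖² + (1/2)‖h‖² (at a fixed point, β = ∇V ≠ 0).
f_m := f_n − (1/‖β‖²)·R(HJ(f_n,G,h))·β satisfies HJ(f_m,G,h) ≤ 0 and minimizes
the distance ‖f − f_n‖ over feasible f (equivalently, squared distance). -/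
theorem stmt7 {n m l : ℕ} (β : Fin n → ℝ) (hβ : β ≠ 0)
    (G : Matrix (Fin n) (Fin m) ℝ) (h : Fin l → ℝ) (γ : ℝ) (hγ : 0 < γ)
    (fn : Fin n → ℝ) :
    let HJ : (Fin n → ℝ) → ℝ := fun f =>
      β ⬝ᵥ f + (1 / (2 * γ ^ 2)) * ((Gᵀ *ᵥ β) ⬝ᵥ (Gᵀ *ᵥ β)) + (1 / 2) * (h ⬝ᵥ h)
    let fm : Fin n → ℝ := fn - ((1 / (β ⬝ᵥ β)) * max (HJ fn) 0) • β
    HJ fm ≤ 0 ∧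
    ∀ f : Fin n → ℝ, HJ f ≤ 0 → (fm - fn) ⬝ᵥ (fm - fn) ≤ (f - fn) ⬝ᵥ (f - fn) :=
  stmt7_general β hβ G h γ fn
end

section
/- Let β ∈ ℝⁿ be nonzero, G_n ∈ ℝ^{n×m}, h_n ∈ ℝˡ, γ > 0, k ∈ [0,1], and define V_fh = βᵀf_n + (1/2)‖h_n‖², V_G = (1/(2γ²))‖G_nᵀβ‖². Assume V_G > 0. Then f_m = f_n − (1/‖β‖²)·R(V_fh + k²·V_G)·β and G_m = G_n − (1 − √(C(−V_fh/V_G; k², 1)))·(ββᵀ/‖β‖²)·G_n satisfy HJ(f_m, G_m, h_n) ≤ 0, where HJ(f,G,h) = βᵀf + (1/(2γ²))‖Gᵀβ‖² + (1/2)‖h‖². -/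
open Matrix

/-- With V_fh = βᵀf_n + (1/2)‖h_n‖², V_G = (1/(2γ²))‖G_nᵀβ‖² > 0,
the modified dynamics f_m = f_n − (1/‖β‖²)·R(V_fh + k²V_G)·β and
G_m = G_n − (1 − √(C(−V_fh/V_G; k², 1)))·(ββᵀ/‖β‖²)·G_n satisfy HJ(f_m,G_m,h_n) ≤ 0. -/
theorem stmt9 {n m l : ℕ} (β : Fin n → ℝ) (hβ : β ≠ 0) (γ : ℝ) (hγ : 0 < γ)
    (fn : Fin n → ℝ) (Gn : Matrix (Fin n) (Fin m) ℝ) (hn : Fin l → ℝ)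
    (k : ℝ) (hk0 : 0 ≤ k) (hk1 : k ≤ 1) :
    let Vfh : ℝ := β ⬝ᵥ fn + (1 / 2) * (hn ⬝ᵥ hn)
    let VG : ℝ := (1 / (2 * γ ^ 2)) * ((Gnᵀ *ᵥ β) ⬝ᵥ (Gnᵀ *ᵥ β))
    0 < VG →
    let s : ℝ := min (max (-Vfh / VG) (k ^ 2)) 1
    let fm : Fin n → ℝ := fn - ((1 / (β ⬝ᵥ β)) * max (Vfh + k ^ 2 * VG) 0) • β
    let Gm : Matrix (Fin n) (Fin m) ℝ :=
      Gn - (1 - Real.sqrt s) • (((1 / (β ⬝ᵥ β)) • vecMulVec β β) * Gn)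
    β ⬝ᵥ fm + (1 / (2 * γ ^ 2)) * ((Gmᵀ *ᵥ β) ⬝ᵥ (Gmᵀ *ᵥ β)) + (1 / 2) * (hn ⬝ᵥ hn) ≤ 0 := by
  intro Vfh VG hVG s fm Gm
  have hββ : 0 < β ⬝ᵥ β := by
    have h1 : β ⬝ᵥ β ≠ 0 := fun h => hβ ((dotProduct_self_eq_zero).mp h)
    have h2 : 0 ≤ β ⬝ᵥ β := Finset.sum_nonneg fun i _ => mul_self_nonneg _
    exact lt_of_le_of_ne h2 (Ne.symm h1)
  have hs0 : 0 ≤ s := le_min (le_trans (pow_nonneg hk0 2) (le_max_right _ _)) zero_le_one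
  -- key: vecMulVec β β *ᵥ β = (β⬝ᵥβ) • β
  have hvv : vecMulVec β β *ᵥ β = (β ⬝ᵥ β) • β := by
    ext i
    simp only [mulVec, vecMulVec_apply, dotProduct, Pi.smul_apply, smul_eq_mul, mul_assoc,
      ← Finset.mul_sum]
    ring
  have hvvT : (vecMulVec β β)ᵀ = vecMulVec β β := by
    ext i j; simp [vecMulVec_apply, mul_comm]
  have hGm : Gmᵀ *ᵥ β = Real.sqrt s • (Gnᵀ *ᵥ β) := by
    show (Gn - (1 - Real.sqrt s) • (((1 / (β ⬝ᵥ β)) • vecMulVec β β) * Gn))ᵀ *ᵥ β = _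
    rw [transpose_sub, transpose_smul, transpose_mul, transpose_smul, hvvT,
      sub_mulVec, smul_mulVec, ← mulVec_mulVec, smul_mulVec, hvv]
    have : (β ⬝ᵥ β)⁻¹ • ((β ⬝ᵥ β) • β) = β := by
      rw [smul_smul, inv_mul_cancel₀ (ne_of_gt hββ), one_smul]
    simp only [one_div, this]
    ext j
    simp only [Pi.sub_apply, Pi.smul_apply, smul_eq_mul]
    ring
  have hdot : (Gmᵀ *ᵥ β) ⬝ᵥ (Gmᵀ *ᵥ β) = s * ((Gnᵀ *ᵥ β) ⬝ᵥ (Gnᵀ *ᵥ β)) := by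
    rw [hGm, smul_dotProduct, dotProduct_smul, smul_eq_mul, smul_eq_mul, ← mul_assoc,
      Real.mul_self_sqrt hs0]
  have hfm : β ⬝ᵥ fm = β ⬝ᵥ fn - max (Vfh + k ^ 2 * VG) 0 := by
    show β ⬝ᵥ (fn - ((1 / (β ⬝ᵥ β)) * max (Vfh + k ^ 2 * VG) 0) • β) = _
    rw [dotProduct_sub, dotProduct_smul, smul_eq_mul]
    congr 1
    field_simp
  have hVGdef : (1 / (2 * γ ^ 2)) * ((Gnᵀ *ᵥ β) ⬝ᵥ (Gnᵀ *ᵥ β)) = VG := rfl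
  rw [hdot, hfm]
  have key : β ⬝ᵥ fn - max (Vfh + k ^ 2 * VG) 0 + 1 / (2 * γ ^ 2) * (s * ((Gnᵀ *ᵥ β) ⬝ᵥ (Gnᵀ *ᵥ β))) + 1 / 2 * (hn ⬝ᵥ hn) = Vfh + s * VG - max (Vfh + k ^ 2 * VG) 0 := by
    show _ = (β ⬝ᵥ fn + (1 / 2) * (hn ⬝ᵥ hn)) + s * ((1 / (2 * γ ^ 2)) * ((Gnᵀ *ᵥ β) ⬝ᵥ (Gnᵀ *ᵥ β))) - _
    ring
  rw [key]
  -- case analysis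
  rcases le_or_gt (-Vfh / VG) (k ^ 2) with hc | hc
  · -- s = k², Vfh + k²VG ≥ 0
    have hsk : s = k ^ 2 := by
      have : max (-Vfh / VG) (k ^ 2) = k ^ 2 := max_eq_right hc
      simp only [s, this, min_eq_left (by nlinarith : k ^ 2 ≤ 1)]
    have hpos : 0 ≤ Vfh + k ^ 2 * VG := by
      rw [div_le_iff₀ hVG] at hc; linarith
    rw [hsk, max_eq_left hpos]; linarith
  · have hc' : k ^ 2 * VG < -Vfh := by rwa [lt_div_iff₀ hVG] at hc
    have hneg : Vfh + k ^ 2 * VG < 0 := by linarith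
    rw [max_eq_right (le_of_lt hneg)]
    rcases le_or_gt (-Vfh / VG) 1 with h1 | h1
    · have hsv : s = -Vfh / VG := by
        simp only [s, max_eq_left (le_of_lt hc), min_eq_left h1]
      rw [hsv]
      rw [div_mul_cancel₀ _ (ne_of_gt hVG)]; linarith
    · have hsv : s = 1 := by
        simp only [s, max_eq_left (le_of_lt hc), min_eq_right (le_of_lt h1)]
      rw [hsv, one_mul]
      rw [lt_div_iff₀ hVG, one_mul] at h1; linarith
end

section
/- Let β ∈ ℝⁿ be nonzero, f_n ∈ ℝⁿ, G_n ∈ ℝ^{n×m}, h_n ∈ ℝˡ, γ > 0, k ∈ [0,1]. Define V_f = βᵀf_n and V_Gh = (1/(2γ²))‖G_nᵀβ‖² + (1/2)‖h_n‖², and assume V_Gh > 0. Set s = C(−V_f/V_Gh; k², 1), f_m = f_n − (1/‖β‖²)·R(V_f + k²·V_Gh)·β, G_m = G_n − (1 − √s)·(ββᵀ/‖β‖²)·G_n, h_m = √s·h_n. Then HJ(f_m, G_m, h_m) ≤ 0, where HJ(f,G,h) = βᵀf + (1/(2γ²))‖Gᵀβ‖² + (1/2)‖h‖². -/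
open Matrix

/-!
The correction of `G` only rescales the `β`-component of its columns, so
`G_mᵀ β = √s · G_nᵀ β`; together with `h_m = √s · h_n` this gives
`HJ(f_m, G_m, h_m) = V_f - R(V_f + k² V_Gh) + s · V_Gh`.
If `V_f + k² V_Gh ≤ 0` then `k² ≤ -V_f / V_Gh`, so `s ≤ -V_f / V_Gh`; otherwise the
clamp selects `s = k²`. In both cases the right-hand side is nonpositive.
-/

section Projection

variable {R ι κ : Type*} [Field R] [Fintype ι]

theorem dotProduct_sub_div_dotProduct_self_smul {β : ι → R} (hβ : β ⬝ᵥ β ≠ 0)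
    (f : ι → R) (a : R) :
    β ⬝ᵥ (f - (1 / (β ⬝ᵥ β) * a) • β) = β ⬝ᵥ f - a := by
  rw [dotProduct_sub, dotProduct_smul, smul_eq_mul, one_div, mul_comm _ a, mul_assoc,
    inv_mul_cancel₀ hβ, mul_one]

theorem transpose_sub_smul_projection_mul_mulVec {β : ι → R} (hβ : β ⬝ᵥ β ≠ 0)
    (G : Matrix ι κ R) (t : R) :
    (G - t • ((1 / (β ⬝ᵥ β)) • vecMulVec β β * G))ᵀ *ᵥ β = (1 - t) • (Gᵀ *ᵥ β) := by
  have hproj : ((1 / (β ⬝ᵥ β)) • vecMulVec β β) *ᵥ β = β := by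
    rw [smul_mulVec, vecMulVec_mulVec, op_smul_eq_smul, smul_smul, one_div,
      inv_mul_cancel₀ hβ, one_smul]
  rw [transpose_sub, transpose_smul, transpose_mul, sub_mulVec, smul_mulVec, ← mulVec_mulVec,
    transpose_smul, transpose_vecMulVec, hproj, sub_smul, one_smul]

end Projection

theorem smul_dotProduct_smul_self {R ι : Type*} [CommSemiring R] [Fintype ι] (c : R)
    (v : ι → R) : (c • v) ⬝ᵥ (c • v) = c ^ 2 * (v ⬝ᵥ v) := by
  rw [smul_dotProduct, dotProduct_smul, smul_eq_mul, smul_eq_mul, ← mul_assoc, sq]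

theorem add_clamp_mul_le_max {K : Type*} [Field K] [LinearOrder K] [IsStrictOrderedRing K]
    {a c V : K} (hV : 0 < V) (hc : c ≤ 1) :
    a + min (max (-a / V) c) 1 * V ≤ max (a + c * V) 0 := by
  rcases le_or_gt (a + c * V) 0 with hneg | hpos
  · have hc_le : c ≤ -a / V := (le_div_iff₀ hV).mpr (by linarith)
    have hs_le : min (max (-a / V) c) 1 ≤ -a / V := min_le_of_left_le (max_le le_rfl hc_le)
    have := (le_div_iff₀ hV).mp hs_le
    exact le_max_of_le_right (by linarith)
  · have hs : min (max (-a / V) c) 1 = c := by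
      rw [max_eq_right ((div_le_iff₀ hV).mpr (by linarith)), min_eq_left hc]
    rw [hs, max_eq_left hpos.le]

theorem stmt10_general {n m l : ℕ} (β : Fin n → ℝ) (hβ : β ≠ 0) (γ : ℝ)
    (fn : Fin n → ℝ) (Gn : Matrix (Fin n) (Fin m) ℝ) (hn : Fin l → ℝ)
    (k : ℝ) (hk0 : 0 ≤ k) (hk1 : k ≤ 1) :
    let Vf : ℝ := β ⬝ᵥ fn
    let VGh : ℝ := (1 / (2 * γ ^ 2)) * ((Gnᵀ *ᵥ β) ⬝ᵥ (Gnᵀ *ᵥ β)) + (1 / 2) * (hn ⬝ᵥ hn)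
    0 < VGh →
    let s : ℝ := min (max (-Vf / VGh) (k ^ 2)) 1
    let fm : Fin n → ℝ := fn - ((1 / (β ⬝ᵥ β)) * max (Vf + k ^ 2 * VGh) 0) • β
    let Gm : Matrix (Fin n) (Fin m) ℝ :=
      Gn - (1 - Real.sqrt s) • (((1 / (β ⬝ᵥ β)) • vecMulVec β β) * Gn)
    let hm : Fin l → ℝ := Real.sqrt s • hn
    β ⬝ᵥ fm + (1 / (2 * γ ^ 2)) * ((Gmᵀ *ᵥ β) ⬝ᵥ (Gmᵀ *ᵥ β)) + (1 / 2) * (hm ⬝ᵥ hm) ≤ 0 := by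
  intro Vf VGh hVGh s fm Gm hm
  have hββ : β ⬝ᵥ β ≠ 0 := dotProduct_self_eq_zero.not.mpr hβ
  have hk2 : k ^ 2 ≤ 1 := pow_le_one₀ hk0 hk1
  have hsq : Real.sqrt s ^ 2 = s :=
    Real.sq_sqrt ((sq_nonneg k).trans (le_min (le_max_right _ _) hk2))
  have hf : β ⬝ᵥ fm = Vf - max (Vf + k ^ 2 * VGh) 0 :=
    dotProduct_sub_div_dotProduct_self_smul hββ fn _
  have hG : Gmᵀ *ᵥ β = Real.sqrt s • (Gnᵀ *ᵥ β) := by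
    rw [transpose_sub_smul_projection_mul_mulVec hββ, sub_sub_cancel]
  rw [hf, hG, smul_dotProduct_smul_self, smul_dotProduct_smul_self, hsq]
  have hGh : 1 / (2 * γ ^ 2) * (s * ((Gnᵀ *ᵥ β) ⬝ᵥ (Gnᵀ *ᵥ β))) + 1 / 2 * (s * (hn ⬝ᵥ hn))
      = s * VGh := by ring
  linarith [add_clamp_mul_le_max (a := Vf) hVGh hk2]

/-- With V_f = βᵀf_n and V_Gh = (1/(2γ²))‖G_nᵀβ‖² + (1/2)‖h_n‖² > 0,
s = C(−V_f/V_Gh; k², 1), the projected triplet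
f_m = f_n − (1/‖β‖²)·R(V_f + k²V_Gh)·β, G_m = G_n − (1−√s)·(ββᵀ/‖β‖²)·G_n, h_m = √s·h_n
satisfies HJ(f_m,G_m,h_m) ≤ 0. -/
theorem stmt10 {n m l : ℕ} (β : Fin n → ℝ) (hβ : β ≠ 0) (γ : ℝ) (hγ : 0 < γ)
    (fn : Fin n → ℝ) (Gn : Matrix (Fin n) (Fin m) ℝ) (hn : Fin l → ℝ)
    (k : ℝ) (hk0 : 0 ≤ k) (hk1 : k ≤ 1) :
    let Vf : ℝ := β ⬝ᵥ fn
    let VGh : ℝ := (1 / (2 * γ ^ 2)) * ((Gnᵀ *ᵥ β) ⬝ᵥ (Gnᵀ *ᵥ β)) + (1 / 2) * (hn ⬝ᵥ hn)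
    0 < VGh →
    let s : ℝ := min (max (-Vf / VGh) (k ^ 2)) 1
    let fm : Fin n → ℝ := fn - ((1 / (β ⬝ᵥ β)) * max (Vf + k ^ 2 * VGh) 0) • β
    let Gm : Matrix (Fin n) (Fin m) ℝ :=
      Gn - (1 - Real.sqrt s) • (((1 / (β ⬝ᵥ β)) • vecMulVec β β) * Gn)
    let hm : Fin l → ℝ := Real.sqrt s • hn
    β ⬝ᵥ fm + (1 / (2 * γ ^ 2)) * ((Gmᵀ *ᵥ β) ⬝ᵥ (Gmᵀ *ᵥ β)) + (1 / 2) * (hm ⬝ᵥ hm) ≤ 0 :=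
  stmt10_general β hβ γ fn Gn hn k hk0 hk1
end
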